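/- If f is left monogenic then xf(x) is harmonic: Let n ≥ 2, let U ⊆ ℝⁿ be open, and let f : U → Cl_n be a smooth left monogenic function. Then the function x ↦ x f(x) (Clifford product of the vector x with f(x)) satisfies D²(x f(x)) = 0 on U; equivalently, Δ(x f(x)) = 0, i.e. x f(x) is harmonic on U. -/

import Mathlib

noncomputable section

open MeasureTheory
open scoped BoundedContinuousFunction

/-- Euclidean space `ℝⁿ`. -/
abbrev Ev (n : ℕ) := EuclideanSpace ℝ (Fin n)

/-- The negative-definite quadratic form `x ↦ -‖x‖²` on `ℝⁿ`. -/
def Qn (n : ℕ) : QuadraticForm ℝ (Ev n) :=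
  -(LinearMap.BilinMap.toQuadraticMap (innerₗ (Ev n)))

/-- The real Clifford algebra `Cl_n`, in which `e_i e_j + e_j e_i = -2 δ_{ij}` and
vectors `x ∈ ℝⁿ` satisfy `x² = -‖x‖²`. -/
abbrev Cl (n : ℕ) := CliffordAlgebra (Qn n)

/-- The embedding of vectors `ℝⁿ ⊆ Cl_n`. -/
def toCl (n : ℕ) (x : Ev n) : Cl n := CliffordAlgebra.ι (Qn n) x

/-- The generators `e_i` of `Cl_n`. -/
def eCl (n : ℕ) (i : Fin n) : Cl n := toCl n (EuclideanSpace.single i 1)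

/-! ### A norm on `Cl n`.
`Cl n` is finite dimensional, so all norms on it are equivalent and induce
the canonical topology; we fix one obtained from a linear embedding into a
space of bounded functions. -/

/-- Index type of a basis of `Cl n`. -/
def ClIdx (n : ℕ) : Type _ := Module.Basis.ofVectorSpaceIndex ℝ (Cl n)

instance (n : ℕ) : TopologicalSpace (ClIdx n) := ⊥
instance (n : ℕ) : DiscreteTopology (ClIdx n) := ⟨rfl⟩

/-- Finitely supported functions embed into bounded continuous functions
(w.r.t. the discrete topology). -/
def finsuppToBCF (ι : Type*) [TopologicalSpace ι] [DiscreteTopology ι] :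
    (ι →₀ ℝ) →ₗ[ℝ] (ι →ᵇ ℝ) where
  toFun f := BoundedContinuousFunction.ofNormedAddCommGroup f continuous_of_discreteTopology
    (∑ a ∈ f.support, ‖f a‖) (by
      intro x
      by_cases hx : x ∈ f.support
      · exact Finset.single_le_sum (fun a _ => norm_nonneg _) hx
      · rw [Finsupp.notMem_support_iff.mp hx]
        simpa using Finset.sum_nonneg (fun a _ => norm_nonneg (f a)))
  map_add' f g := by ext i; simp
  map_smul' c f := by ext i; simp

lemma finsuppToBCF_injective (ι : Type*) [TopologicalSpace ι] [DiscreteTopology ι] :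
    Function.Injective (finsuppToBCF ι) := by
  intro f g h
  ext i
  have := congrFun (congrArg DFunLike.coe h) i
  simpa [finsuppToBCF, BoundedContinuousFunction.coe_ofNormedAddCommGroup] using this

/-- A linear injection of `Cl n` into a normed space. -/
def clEmb (n : ℕ) : Cl n →ₗ[ℝ] (ClIdx n →ᵇ ℝ) :=
  (finsuppToBCF (ClIdx n)).comp (Module.Basis.ofVectorSpace ℝ (Cl n)).repr.toLinearMap

lemma clEmb_injective (n : ℕ) : Function.Injective (clEmb n) :=
  (finsuppToBCF_injective (ClIdx n)).comp (Module.Basis.ofVectorSpace ℝ (Cl n)).repr.injective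

instance (n : ℕ) : NormedAddCommGroup (Cl n) :=
  NormedAddCommGroup.induced (Cl n) (ClIdx n →ᵇ ℝ) (clEmb n) (clEmb_injective n)

instance (n : ℕ) : NormedSpace ℝ (Cl n) :=
  NormedSpace.induced ℝ (Cl n) (ClIdx n →ᵇ ℝ) (clEmb n)

/-! ### The Dirac operator -/

/-- The partial derivative `∂f/∂x_i` of a `Cl_n`-valued function. -/
def pd (n : ℕ) (i : Fin n) (f : Ev n → Cl n) (x : Ev n) : Cl n :=
  fderiv ℝ f x (EuclideanSpace.single i 1)

/-- The Dirac operator `Df = Σᵢ eᵢ ∂f/∂xᵢ`. -/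
def Dirac (n : ℕ) (f : Ev n → Cl n) : Ev n → Cl n :=
  fun x => ∑ i, eCl n i * pd n i f x

/-- The right Dirac operator `fD = Σᵢ (∂f/∂xᵢ) eᵢ`. -/
def DiracR (n : ℕ) (f : Ev n → Cl n) : Ev n → Cl n :=
  fun x => ∑ i, pd n i f x * eCl n i

/-- `f` is left monogenic (left Clifford holomorphic) on `U`: it is `C¹` with `Df = 0` there. -/
def LeftMonogenicOn (n : ℕ) (f : Ev n → Cl n) (U : Set (Ev n)) : Prop :=
  ContDiffOn ℝ 1 f U ∧ ∀ x ∈ U, Dirac n f x = 0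

/-- `g` is right monogenic on `U`: it is `C¹` with `gD = 0` there. -/
def RightMonogenicOn (n : ℕ) (g : Ev n → Cl n) (U : Set (Ev n)) : Prop :=
  ContDiffOn ℝ 1 g U ∧ ∀ x ∈ U, DiracR n g x = 0

/-- The Laplacian of a `Cl_n`-valued function. -/
def Lap (n : ℕ) (f : Ev n → Cl n) (x : Ev n) : Cl n :=
  ∑ i, pd n i (pd n i f) x

lemma Qn_apply (n : ℕ) (v : Ev n) : Qn n v = -(inner ℝ v v : ℝ) := by
  simp [Qn, QuadraticMap.neg_apply, LinearMap.BilinMap.toQuadraticMap_apply,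
    innerₗ_apply_apply]

lemma eCl_mul_self (n : ℕ) (i : Fin n) : eCl n i * eCl n i = -1 := by
  rw [eCl, toCl, CliffordAlgebra.ι_sq_scalar, Qn_apply]
  simp [EuclideanSpace.inner_single_left, EuclideanSpace.single_apply]

lemma eCl_mul_add_swap (n : ℕ) {i j : Fin n} (h : i ≠ j) :
    eCl n i * eCl n j + eCl n j * eCl n i = 0 := by
  simp only [eCl, toCl]
  rw [CliffordAlgebra.ι_mul_ι_add_swap]
  have : QuadraticMap.polar (Qn n) (EuclideanSpace.single i 1) (EuclideanSpace.single j 1) = 0 := by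
    simp only [QuadraticMap.polar, Qn_apply, inner_add_add_self]
    simp [EuclideanSpace.inner_single_left, EuclideanSpace.single_apply, h, h.symm]
    
  rw [this, map_zero]
/-! ### Finite dimensionality of `Cl n` -/

def prodE (n : ℕ) (l : List (Fin n)) : Cl n := (l.map (eCl n)).prod

lemma prodE_nil (n : ℕ) : prodE n [] = 1 := rfl

lemma prodE_cons (n : ℕ) (i : Fin n) (l : List (Fin n)) :
    prodE n (i :: l) = eCl n i * prodE n l := by
  simp [prodE]

lemma prodE_append (n : ℕ) (l l' : List (Fin n)) :
    prodE n (l ++ l') = prodE n l * prodE n l' := by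
  simp [prodE]

def chainSet (n : ℕ) : Set (Cl n) :=
  {y | ∃ l : List (Fin n), l.Chain' (· < ·) ∧ y = prodE n l}

def S0 (n : ℕ) : Submodule ℝ (Cl n) := Submodule.span ℝ (chainSet n)

lemma eCl_mul_comm (n : ℕ) {i j : Fin n} (h : i ≠ j) :
    eCl n i * eCl n j = -(eCl n j * eCl n i) :=
  eq_neg_of_add_eq_zero_left (eCl_mul_add_swap n h)

lemma key (n : ℕ) (i : Fin n) : ∀ (l : List (Fin n)), l.Chain' (· < ·) →
    eCl n i * prodE n l ∈ Submodule.span ℝ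
      {y | ∃ l' : List (Fin n), l'.Chain' (· < ·) ∧ (∀ x ∈ l', i ≤ x ∨ x ∈ l) ∧
        y = prodE n l'} := by
  intro l
  induction l with
  | nil =>
    intro _
    refine Submodule.subset_span ⟨[i], ?_, ?_, ?_⟩ <;>
      simp [prodE_nil, prodE_cons, List.Chain']
  | cons j t IH =>
    intro hchain
    have ht : t.Chain' (· < ·) := hchain.tail
    have hjt : ∀ x ∈ t, j < x := by
      have := (List.isChain_iff_pairwise.mp hchain)
      exact fun x hx => (List.pairwise_cons.mp this).1 x hx
    rcases lt_trichotomy i j with hij | hij | hij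
    · refine Submodule.subset_span ⟨i :: j :: t, ?_, ?_, ?_⟩
      · exact List.isChain_cons_cons.mpr ⟨hij, hchain⟩
      · intro x hx
        rcases List.mem_cons.mp hx with h | h
        · exact Or.inl (le_of_eq h.symm)
        · exact Or.inr h
      · simp [prodE_cons]
    · subst hij
      rw [prodE_cons, ← mul_assoc, eCl_mul_self, neg_one_mul]
      refine neg_mem (Submodule.subset_span ⟨t, ht, fun x hx => Or.inr (List.mem_cons_of_mem _ hx), rfl⟩)
    · rw [prodE_cons, ← mul_assoc, eCl_mul_comm n (ne_of_gt hij), neg_mul, mul_assoc]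
      refine neg_mem ?_
      have hIH := IH ht
      -- show e_j * z lands in target span for all z in the IH span
      refine Submodule.span_induction
        (p := fun z _ => eCl n j * z ∈ Submodule.span ℝ
          {y | ∃ l' : List (Fin n), l'.Chain' (· < ·) ∧ (∀ x ∈ l', i ≤ x ∨ x ∈ j :: t) ∧
            y = prodE n l'}) ?_ ?_ ?_ ?_ hIH
      · rintro y ⟨l', hl', hmem, rfl⟩
        have hjl' : ∀ x ∈ l', j < x := by
          intro x hx
          rcases hmem x hx with h | h
          · exact lt_of_lt_of_le hij h
          · exact hjt x h
        refine Submodule.subset_span ⟨j :: l', ?_, ?_, ?_⟩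
        · rcases l' with _ | ⟨a, t'⟩
          · simp [List.Chain']
          · exact List.isChain_cons_cons.mpr ⟨hjl' a List.mem_cons_self, hl'⟩
        · intro x hx
          rcases List.mem_cons.mp hx with h | h
          · exact Or.inr (h ▸ List.mem_cons_self)
          · rcases hmem x h with h' | h'
            · exact Or.inl h'
            · exact Or.inr (List.mem_cons_of_mem _ h')
        · rw [prodE_cons]
      · simp
      · intro a b _ _ ha hb
        rw [mul_add]; exact add_mem ha hb
      · intro r a _ ha
        rw [mul_smul_comm]; exact Submodule.smul_mem _ r ha

lemma prodE_mem_S0 (n : ℕ) (l : List (Fin n)) : prodE n l ∈ S0 n := by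
  induction l with
  | nil => exact Submodule.subset_span ⟨[], List.isChain_nil, rfl⟩
  | cons i t IH =>
    rw [prodE_cons]
    refine Submodule.span_induction
      (p := fun z _ => eCl n i * z ∈ S0 n) ?_ ?_ ?_ ?_ IH
    · rintro y ⟨l', hl', rfl⟩
      refine Submodule.span_le.mpr ?_ (key n i l' hl')
      rintro y ⟨l'', hl'', _, rfl⟩
      exact Submodule.subset_span ⟨l'', hl'', rfl⟩
    · simp
    · intro a b _ _ ha hb; rw [mul_add]; exact add_mem ha hb
    · intro r a _ ha; rw [mul_smul_comm]; exact Submodule.smul_mem _ r ha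

lemma eCl_mem_S0 (n : ℕ) (i : Fin n) : eCl n i ∈ S0 n := by
  have : eCl n i = prodE n [i] := by simp [prodE_cons, prodE_nil]
  rw [this]; exact prodE_mem_S0 n [i]

lemma toCl_eq_sum (n : ℕ) (m : Ev n) :
    toCl n m = ∑ i, m i • eCl n i := by
  have hm : m = ∑ i, m i • EuclideanSpace.single i (1 : ℝ) := by
    ext j
    have : (∑ i, m i • EuclideanSpace.single i (1 : ℝ)) j
        = ∑ i, (m i • EuclideanSpace.single i (1 : ℝ)) j := by
      rw [WithLp.ofLp_sum, Finset.sum_apply]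
    rw [this]
    simp [EuclideanSpace.single_apply, PiLp.smul_apply, mul_comm]
  unfold toCl eCl
  conv_lhs => rw [hm]
  rw [map_sum]
  simp only [_root_.map_smul]
  rfl

lemma S0_eq_top (n : ℕ) : S0 n = ⊤ := by
  rw [eq_top_iff]
  rintro a -
  induction a using CliffordAlgebra.induction with
  | algebraMap r =>
    rw [Algebra.algebraMap_eq_smul_one]
    exact Submodule.smul_mem _ r (prodE_mem_S0 n [])
  | ι m =>
    rw [show CliffordAlgebra.ι (Qn n) m = toCl n m from rfl, toCl_eq_sum]
    exact Submodule.sum_mem _ fun i _ => Submodule.smul_mem _ _ (eCl_mem_S0 n i)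
  | mul a b ha hb =>
    refine Submodule.span_induction (p := fun z _ => z * b ∈ S0 n) ?_ ?_ ?_ ?_ ha
    · rintro y ⟨l, hl, rfl⟩
      refine Submodule.span_induction (p := fun z _ => prodE n l * z ∈ S0 n) ?_ ?_ ?_ ?_ hb
      · rintro y ⟨l', hl', rfl⟩
        rw [← prodE_append]
        exact prodE_mem_S0 n (l ++ l')
      · simp
      · intro u v _ _ hu hv; rw [mul_add]; exact add_mem hu hv
      · intro r u _ hu; rw [mul_smul_comm]; exact Submodule.smul_mem _ r hu
    · simp
    · intro u v _ _ hu hv; rw [add_mul]; exact add_mem hu hv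
    · intro r u _ hu; rw [smul_mul_assoc]; exact Submodule.smul_mem _ r hu
  | add a b ha hb => exact add_mem ha hb

lemma chainSet_finite (n : ℕ) : (chainSet n).Finite := by
  have h1 : Set.Finite {l : List (Fin n) | l.Chain' (· < ·)} := by
    refine (List.finite_length_le (Fin n) n).subset ?_
    intro l hl
    have hnd : l.Nodup := (List.isChain_iff_pairwise.mp hl).imp ne_of_lt
    simpa using hnd.length_le_card
  refine (h1.image (prodE n)).subset ?_
  rintro y ⟨l, hl, rfl⟩
  exact ⟨l, hl, rfl⟩

instance (n : ℕ) : Module.Finite ℝ (Cl n) :=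
  ⟨Submodule.fg_def.mpr ⟨chainSet n, chainSet_finite n, S0_eq_top n⟩⟩

instance (n : ℕ) : FiniteDimensional ℝ (Cl n) := inferInstance
/-! ### Continuous linear maps on `Cl n` -/

def tClL (n : ℕ) : Ev n →L[ℝ] Cl n :=
  LinearMap.toContinuousLinearMap (CliffordAlgebra.ι (Qn n))

def mulCLM (n : ℕ) : Cl n →L[ℝ] Cl n →L[ℝ] Cl n :=
  LinearMap.toContinuousLinearMap
    { toFun := fun a => LinearMap.toContinuousLinearMap (LinearMap.mulLeft ℝ a)
      map_add' := fun a b => by ext c; simp [add_mul]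
      map_smul' := fun r a => by ext c; simp [smul_mul_assoc] }

/-! ### Basic facts about `pd` -/

lemma pd_congr_nhds {n : ℕ} {f g : Ev n → Cl n} {x : Ev n} (i : Fin n)
    (h : f =ᶠ[nhds x] g) : pd n i f x = pd n i g x := by
  unfold pd; rw [h.fderiv_eq]

lemma pd_const_mul {n : ℕ} {f : Ev n → Cl n} {x : Ev n} (i : Fin n) (c : Cl n)
    (hf : DifferentiableAt ℝ f x) :
    pd n i (fun y => c * f y) x = c * pd n i f x := by
  have h : HasFDerivAt (fun y => c * f y) ((mulCLM n c).comp (fderiv ℝ f x)) x := by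
    have := (mulCLM n c).hasFDerivAt.comp x hf.hasFDerivAt
    exact this
  unfold pd
  rw [h.fderiv]
  rfl

lemma pd_add {n : ℕ} {f g : Ev n → Cl n} {x : Ev n} (i : Fin n)
    (hf : DifferentiableAt ℝ f x) (hg : DifferentiableAt ℝ g x) :
    pd n i (fun y => f y + g y) x = pd n i f x + pd n i g x := by
  unfold pd
  rw [fderiv_fun_add hf hg]
  rfl

lemma hasFDerivAt_vecMul {n : ℕ} {f : Ev n → Cl n} {x : Ev n}
    (hf : DifferentiableAt ℝ f x) :
    HasFDerivAt (fun z => toCl n z * f z)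
      ((mulCLM n (toCl n x)).comp (fderiv ℝ f x)
        + ((mulCLM n).comp (tClL n)).flip (f x)) x := by
  have hc : HasFDerivAt (fun z => (mulCLM n).comp (tClL n) z)
      ((mulCLM n).comp (tClL n)) x := ((mulCLM n).comp (tClL n)).hasFDerivAt
  have := hc.clm_apply hf.hasFDerivAt
  exact this

lemma differentiableAt_vecMul {n : ℕ} {f : Ev n → Cl n} {x : Ev n}
    (hf : DifferentiableAt ℝ f x) :
    DifferentiableAt ℝ (fun z => toCl n z * f z) x :=
  (hasFDerivAt_vecMul hf).differentiableAt

lemma pd_vecMul {n : ℕ} {f : Ev n → Cl n} {x : Ev n} (i : Fin n)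
    (hf : DifferentiableAt ℝ f x) :
    pd n i (fun z => toCl n z * f z) x = toCl n x * pd n i f x + eCl n i * f x := by
  unfold pd
  rw [(hasFDerivAt_vecMul hf).fderiv]
  rfl

lemma contDiffAt_vecMul {n : ℕ} {f : Ev n → Cl n} {x : Ev n} {m : WithTop ℕ∞}
    (hf : ContDiffAt ℝ m f x) :
    ContDiffAt ℝ m (fun z => toCl n z * f z) x := by
  have hc : ContDiffAt ℝ m (fun z => (mulCLM n).comp (tClL n) z) x :=
    (((mulCLM n).comp (tClL n)).contDiff).contDiffAt
  exact hc.clm_apply hf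

/-- `pd i g` is differentiable when `g` is `C²`. -/
lemma differentiableAt_pd {n : ℕ} {g : Ev n → Cl n} {x : Ev n} (i : Fin n)
    (hg : ContDiffAt ℝ 2 g x) : DifferentiableAt ℝ (pd n i g) x := by
  have hfd : DifferentiableAt ℝ (fderiv ℝ g) x :=
    (hg.fderiv_right (m := 1) (by norm_num)).differentiableAt (by norm_num)
  exact hfd.clm_apply (differentiableAt_const _)

/-- Second partials via the second derivative. -/
lemma pd_pd_eq {n : ℕ} {g : Ev n → Cl n} {x : Ev n} (i j : Fin n)
    (hg : ContDiffAt ℝ 2 g x) :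
    pd n j (pd n i g) x
      = fderiv ℝ (fderiv ℝ g) x (EuclideanSpace.single j 1) (EuclideanSpace.single i 1) := by
  have hfd : DifferentiableAt ℝ (fderiv ℝ g) x :=
    (hg.fderiv_right (m := 1) (by norm_num)).differentiableAt (by norm_num)
  unfold pd
  rw [fderiv_clm_apply hfd (differentiableAt_const _)]
  simp

lemma pd_pd_symm {n : ℕ} {g : Ev n → Cl n} {x : Ev n} (i j : Fin n)
    (hg : ContDiffAt ℝ 2 g x) :
    pd n j (pd n i g) x = pd n i (pd n j g) x := by
  rw [pd_pd_eq i j hg, pd_pd_eq j i hg]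
  exact (hg.isSymmSndFDerivAt (by simp)) _ _
/-! ### The algebraic double-sum identity -/

lemma anticomm_sum {n : ℕ} (H : Fin n → Fin n → Cl n) (hH : ∀ i j, H i j = H j i) :
    ∑ j, ∑ i, eCl n j * (eCl n i * H j i) = -∑ i, H i i := by
  have hpair : ∀ j i : Fin n,
      eCl n j * (eCl n i * H j i) + eCl n i * (eCl n j * H j i)
        = if i = j then -(H j j) + -(H j j) else 0 := by
    intro j i
    rw [← mul_assoc, ← mul_assoc, ← add_mul]
    by_cases h : i = j
    · subst h
      rw [if_pos rfl, eCl_mul_self, add_mul, neg_one_mul]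
    · rw [if_neg h, eCl_mul_add_swap n (fun hji => h hji.symm), zero_mul]
  have hswap : ∑ j, ∑ i, eCl n j * (eCl n i * H j i)
      = ∑ j, ∑ i, eCl n i * (eCl n j * H j i) := by
    rw [Finset.sum_comm]
    refine Finset.sum_congr rfl fun i _ => Finset.sum_congr rfl fun j _ => ?_
    rw [hH j i]
  have h2 : (∑ j, ∑ i, eCl n j * (eCl n i * H j i))
        + (∑ j, ∑ i, eCl n j * (eCl n i * H j i))
      = (-∑ i, H i i) + (-∑ i, H i i) := by
    conv_lhs => rw [show (∑ j, ∑ i, eCl n j * (eCl n i * H j i))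
        + (∑ j, ∑ i, eCl n j * (eCl n i * H j i))
      = (∑ j, ∑ i, eCl n j * (eCl n i * H j i))
        + (∑ j, ∑ i, eCl n i * (eCl n j * H j i)) from by rw [← hswap]]
    rw [← Finset.sum_add_distrib]
    have : ∀ j ∈ Finset.univ, (∑ i, eCl n j * (eCl n i * H j i))
        + (∑ i, eCl n i * (eCl n j * H j i)) = -(H j j) + -(H j j) := by
      intro j _
      rw [← Finset.sum_add_distrib]
      rw [Finset.sum_congr rfl fun i _ => hpair j i]
      simp
    rw [Finset.sum_congr rfl this, Finset.sum_add_distrib, ← Finset.sum_neg_distrib]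
  have h3 : (2 : ℝ) • (∑ j, ∑ i, eCl n j * (eCl n i * H j i))
      = (2 : ℝ) • (-∑ i, H i i) := by
    rw [two_smul, two_smul]; exact h2
  exact smul_right_injective (Cl n) (two_ne_zero) h3

/-! ### `D² = -Δ` -/

lemma dirac_dirac {n : ℕ} {g : Ev n → Cl n} {x : Ev n} (hg : ContDiffAt ℝ 2 g x) :
    Dirac n (Dirac n g) x = - Lap n g x := by
  have hdiff : ∀ i : Fin n, DifferentiableAt ℝ (fun y => eCl n i * pd n i g y) x := by
    intro i
    exact ((mulCLM n (eCl n i)).differentiableAt).comp x (differentiableAt_pd i hg)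
  have hpd : ∀ j : Fin n, pd n j (Dirac n g) x = ∑ i, eCl n i * pd n j (pd n i g) x := by
    intro j
    have : pd n j (Dirac n g) x = ∑ i, pd n j (fun y => eCl n i * pd n i g y) x := by
      unfold pd Dirac
      rw [fderiv_fun_sum (fun i _ => hdiff i)]
      simp only [ContinuousLinearMap.coe_sum', Finset.sum_apply]
      rfl
    rw [this]
    exact Finset.sum_congr rfl fun i _ =>
      pd_const_mul j (eCl n i) (differentiableAt_pd i hg)
  have : Dirac n (Dirac n g) x = ∑ j, ∑ i, eCl n j * (eCl n i * pd n j (pd n i g) x) := by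
    rw [show Dirac n (Dirac n g) x = ∑ j, eCl n j * pd n j (Dirac n g) x from rfl]
    refine Finset.sum_congr rfl fun j _ => ?_
    rw [hpd j, Finset.mul_sum]
  rw [this]
  have := anticomm_sum (fun j i => pd n j (pd n i g) x)
    (fun i j => pd_pd_symm j i hg)
  rw [this]
  rfl
/-- **If `f` is left monogenic then `x f(x)` is harmonic**: `D²(xf) = 0`,
equivalently `Δ(xf) = 0`. -/
theorem monogenic_mul_vector_harmonic (n : ℕ) (hn : 2 ≤ n) (U : Set (Ev n)) (hU : IsOpen U)
    (f : Ev n → Cl n) (hsm : ContDiffOn ℝ (⊤ : ℕ∞) f U) (hmono : ∀ x ∈ U, Dirac n f x = 0) :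
    (∀ x ∈ U, Dirac n (Dirac n (fun z => toCl n z * f z)) x = 0) ∧
    (∀ x ∈ U, Lap n (fun z => toCl n z * f z) x = 0) := by
  have hC2 : ∀ x ∈ U, ContDiffAt ℝ 2 f x := fun x hx =>
    (hsm.contDiffAt (hU.mem_nhds hx)).of_le (by rw [show (2 : WithTop ℕ∞) = ((2 : ℕ∞) : WithTop ℕ∞) from rfl]; exact WithTop.coe_le_coe.mpr le_top)
  have hxf_smooth : ∀ x ∈ U, ContDiffAt ℝ 2 (fun z => toCl n z * f z) x := fun x hx =>
    contDiffAt_vecMul (hC2 x hx)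
  have hLapf : ∀ x ∈ U, Lap n f x = 0 := by
    intro x hx
    have hzero : Dirac n (Dirac n f) x = 0 := by
      have hev : Dirac n f =ᶠ[nhds x] (fun _ => (0 : Cl n)) := by
        filter_upwards [hU.mem_nhds hx] with y hy using hmono y hy
      have hj : ∀ j, pd n j (Dirac n f) x = 0 := by
        intro j
        rw [pd_congr_nhds j hev]
        unfold pd
        rw [fderiv_const_apply]
        simp
      rw [show Dirac n (Dirac n f) x = ∑ j, eCl n j * pd n j (Dirac n f) x from rfl]
      simp [hj]
    rw [dirac_dirac (hC2 x hx)] at hzero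
    exact neg_eq_zero.mp hzero
  have hLapxf : ∀ x ∈ U, Lap n (fun z => toCl n z * f z) x = 0 := by
    intro x hx
    have hfx := hC2 x hx
    have hdiffx : ∀ y ∈ U, DifferentiableAt ℝ f y := fun y hy =>
      (hC2 y hy).differentiableAt (by norm_num)
    have hterm : ∀ i, pd n i (pd n i (fun z => toCl n z * f z)) x
        = (toCl n x * pd n i (pd n i f) x + eCl n i * pd n i f x) + eCl n i * pd n i f x := by
      intro i
      have hpdev : pd n i (fun z => toCl n z * f z) =ᶠ[nhds x]
          fun y => toCl n y * pd n i f y + eCl n i * f y := by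
        filter_upwards [hU.mem_nhds hx] with y hy using pd_vecMul i (hdiffx y hy)
      rw [pd_congr_nhds i hpdev]
      have hd1 : DifferentiableAt ℝ (pd n i f) x := differentiableAt_pd i hfx
      have h1 : DifferentiableAt ℝ (fun y => toCl n y * pd n i f y) x :=
        differentiableAt_vecMul hd1
      have h2 : DifferentiableAt ℝ (fun y => eCl n i * f y) x :=
        (mulCLM n (eCl n i)).differentiableAt.comp x (hfx.differentiableAt (by norm_num))
      rw [pd_add i h1 h2, pd_vecMul i hd1,
        pd_const_mul i _ (hfx.differentiableAt (by norm_num))]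
    have hD : (∑ i, eCl n i * pd n i f x) = 0 := hmono x hx
    have hL : (∑ i, pd n i (pd n i f) x) = 0 := hLapf x hx
    rw [show Lap n (fun z => toCl n z * f z) x
        = ∑ i, pd n i (pd n i (fun z => toCl n z * f z)) x from rfl]
    rw [Finset.sum_congr rfl fun i _ => hterm i]
    rw [Finset.sum_add_distrib, Finset.sum_add_distrib, ← Finset.mul_sum, hL, hD]
    simp
  refine ⟨fun x hx => ?_, hLapxf⟩
  rw [dirac_dirac (hxf_smooth x hx), hLapxf x hx, neg_zero]
end
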